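/- arXiv:2002.11012 — 2 statements merged into one kernel-verified Lean document; each statement's English description precedes it below -/
import Mathlib

section
/- Let A be a C*-algebra, G a compact group acting on A by a continuous action α, and let π be a finite-dimensional unitary representation of G. Define A₂(π) as the set of matrices [a_{ij}] in A ⊗ B(H_π) (i.e., d×d matrices over A) satisfying (α_g ⊗ id)([a_{ij}]) = [a_{ij}](1 ⊗ π(g)) for all g ∈ G. Then for m, n ∈ A₂(π), the product m n* lies in the fixed-point algebra of α ⊗ id on A ⊗ B(H_π), and the linear span of such products m n* is a two-sided ideal of that fixed-point algebra. -/
open scoped Matrix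

/-! The identity `(α_g ⊗ id)(m) = m (1 ⊗ π g)` on `A₂(π)`, together with `π g (π g)* = 1`, gives
`(α_g ⊗ id)(m n*) = m (1 ⊗ π g (π g)*) n* = m n*`. A fixed matrix `y` commutes with every
`α_g ⊗ id`, so `y A₂(π) ⊆ A₂(π)` and `y* A₂(π) ⊆ A₂(π)`; then `y (m n*) = (y m) n*` and
`(m n*) y = m (y* n)*` keep the span of the products stable under both multiplications. -/

section SpanMulStar

variable {K R : Type*} [Semiring K] [NonUnitalSemiring R] [StarRing R] [Module K R]
  {S : Set R} {x y : R}

theorem mul_left_mem_span_mul_star [SMulCommClass K R R] (hy : ∀ m ∈ S, y * m ∈ S)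
    (hx : x ∈ Submodule.span K {x | ∃ m ∈ S, ∃ n ∈ S, x = m * star n}) :
    y * x ∈ Submodule.span K {x | ∃ m ∈ S, ∃ n ∈ S, x = m * star n} := by
  suffices h : Submodule.span K _ ≤ (Submodule.span K _).comap (LinearMap.mulLeft K y) from h hx
  refine Submodule.span_le.mpr ?_
  rintro _ ⟨m, hm, n, hn, rfl⟩
  exact Submodule.subset_span ⟨y * m, hy m hm, n, hn, (mul_assoc y m (star n)).symm⟩

theorem mul_right_mem_span_mul_star [IsScalarTower K R R] (hy : ∀ n ∈ S, star y * n ∈ S)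
    (hx : x ∈ Submodule.span K {x | ∃ m ∈ S, ∃ n ∈ S, x = m * star n}) :
    x * y ∈ Submodule.span K {x | ∃ m ∈ S, ∃ n ∈ S, x = m * star n} := by
  suffices h : Submodule.span K _ ≤ (Submodule.span K _).comap (LinearMap.mulRight K y) from h hx
  refine Submodule.span_le.mpr ?_
  rintro _ ⟨m, hm, n, hn, rfl⟩
  refine Submodule.subset_span ⟨m, hm, star y * n, hy n hn, ?_⟩
  simp only [LinearMap.mulRight_apply, star_mul, star_star, mul_assoc]

end SpanMulStar

namespace Matrix

variable {n K A B : Type*} [Fintype n]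

theorem map_mul_conjTranspose [NonUnitalNonAssocSemiring A] [StarRing A]
    [NonUnitalNonAssocSemiring B] [StarRing B] {F : Type*} [FunLike F A B]
    [NonUnitalRingHomClass F A B] [StarHomClass F A B] (f : F) (m m' : Matrix n n A) :
    (m * m'ᴴ).map f = m.map f * (m'.map f)ᴴ := by
  rw [Matrix.map_mul, conjTranspose_map _ fun a => map_star f a]

variable [CommSemiring K] [NonUnitalNonAssocSemiring A] [Module K A]

/-- The matrix `m (1 ⊗ u)` for `m` with entries in `A` and a scalar matrix `u`. -/
def mulScalarMatrix (m : Matrix n n A) (u : Matrix n n K) : Matrix n n A :=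
  of fun i j => ∑ l, u l j • m i l

theorem mul_mulScalarMatrix [SMulCommClass K A A] (y m : Matrix n n A) (u : Matrix n n K) :
    y * m.mulScalarMatrix u = (y * m).mulScalarMatrix u := by
  ext i j
  simp only [mulScalarMatrix, mul_apply, of_apply, Finset.mul_sum, mul_smul_comm, Finset.smul_sum]
  exact Finset.sum_comm

theorem mulScalarMatrix_mul_conjTranspose_mulScalarMatrix [DecidableEq n] [StarRing K] [StarRing A]
    [StarModule K A] [IsScalarTower K A A] [SMulCommClass K A A] (m m' : Matrix n n A)
    {u : Matrix n n K} (hu : u * star u = 1) :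
    m.mulScalarMatrix u * (m'.mulScalarMatrix u)ᴴ = m * m'ᴴ := by
  have hu' : ∀ l p, ∑ k, u l k * star (u p k) = if l = p then 1 else 0 := fun l p => by
    simpa [mul_apply, star_apply, one_apply] using congr_fun₂ hu l p
  ext i j
  simp only [mulScalarMatrix, mul_apply, conjTranspose_apply, of_apply, star_sum, star_smul,
    Finset.sum_mul_sum, smul_mul_smul_comm]
  rw [Finset.sum_comm]
  refine Finset.sum_congr rfl fun l _ => ?_
  rw [Finset.sum_comm]
  simp only [← Finset.sum_smul, hu', ite_smul, one_smul, zero_smul, Finset.sum_ite_eq,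
    Finset.mem_univ, if_true]

end Matrix

theorem spectral_subspace_products_ideal_of_fixedPoint_general
    {G A : Type*} [Group G]
    [NonUnitalCStarAlgebra A]
    (α : G → (A ≃⋆ₐ[ℂ] A))
    (d : ℕ) (π : G →* Matrix.unitaryGroup (Fin d) ℂ)
    -- the spectral subspace `A₂(π)`
    (A₂ : Set (Matrix (Fin d) (Fin d) A))
    (hA₂ : A₂ = {m | ∀ g : G, m.map (α g) =
      Matrix.of fun i j => ∑ l, (π g : Matrix (Fin d) (Fin d) ℂ) l j • m i l})
    -- the fixed-point algebra of `α ⊗ id`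
    (F : Set (Matrix (Fin d) (Fin d) A))
    (hF : F = {m | ∀ g : G, m.map (α g) = m})
    -- the span of products `m * nᴴ`
    (J : Submodule ℂ (Matrix (Fin d) (Fin d) A))
    (hJ : J = Submodule.span ℂ {x | ∃ m ∈ A₂, ∃ n ∈ A₂, x = m * nᴴ}) :
    (∀ m ∈ A₂, ∀ n ∈ A₂, m * nᴴ ∈ F) ∧
    (∀ x ∈ J, x ∈ F) ∧
    (∀ x ∈ J, ∀ y ∈ F, x * y ∈ J ∧ y * x ∈ J) := by
  subst hJ
  have mem_A₂ : ∀ {m}, m ∈ A₂ ↔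
      ∀ g, m.map (α g) = m.mulScalarMatrix (π g : Matrix (Fin d) (Fin d) ℂ) := by
    subst hA₂; exact Iff.rfl
  have mem_F : ∀ {m}, m ∈ F ↔ ∀ g, m.map (α g) = m := by
    subst hF; exact Iff.rfl
  have products_mem : ∀ m ∈ A₂, ∀ n ∈ A₂, m * nᴴ ∈ F := fun m hm n hn => mem_F.mpr fun g => by
    rw [Matrix.map_mul_conjTranspose, mem_A₂.mp hm g, mem_A₂.mp hn g]
    exact Matrix.mulScalarMatrix_mul_conjTranspose_mulScalarMatrix m n
      (Unitary.mul_star_self_of_mem (π g).prop)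
  have fixed_mul_mem : ∀ y ∈ F, ∀ m ∈ A₂, y * m ∈ A₂ := fun y hy m hm => mem_A₂.mpr fun g => by
    rw [Matrix.map_mul, mem_F.mp hy g, mem_A₂.mp hm g]
    exact Matrix.mul_mulScalarMatrix y m _
  have conjTranspose_fixed : ∀ y ∈ F, yᴴ ∈ F := fun y hy => mem_F.mpr fun g => by
    rw [Matrix.conjTranspose_map _ fun a => map_star (α g) a, mem_F.mp hy g]
  refine ⟨products_mem, fun x hx => ?_, fun x hx y hy =>
    ⟨mul_right_mem_span_mul_star (fun n hn => fixed_mul_mem _ (conjTranspose_fixed y hy) n hn) hx,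
      mul_left_mem_span_mul_star (fixed_mul_mem y hy) hx⟩⟩
  have span_le_fixed : Submodule.span ℂ {x | ∃ m ∈ A₂, ∃ n ∈ A₂, x = m * nᴴ} ≤
      ⨅ g, LinearMap.eqLocus (LinearMap.mapMatrix (α g : A →ₗ[ℂ] A)) LinearMap.id :=
    Submodule.span_le.mpr fun _ ⟨m, hm, n, hn, hx⟩ =>
      Submodule.mem_iInf _ |>.mpr fun g => hx ▸ mem_F.mp (products_mem m hm n hn) g
  exact mem_F.mpr fun g => (Submodule.mem_iInf _).mp (span_le_fixed hx) g

/-- For a C*-dynamical system `(A, G, α)` with `G` compact and a finite-dimensional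
unitary representation `π` of `G`, with
`A₂(π) = { m : Matrix over A | (α_g ⊗ id)(m) = m (1 ⊗ π g) for all g }`,
the products `m * nᴴ` with `m, n ∈ A₂(π)` lie in the fixed-point algebra of
`α ⊗ id`, and their linear span is a two-sided ideal of that fixed-point algebra. -/
theorem spectral_subspace_products_ideal_of_fixedPoint
    {G A : Type*} [Group G] [TopologicalSpace G] [IsTopologicalGroup G] [CompactSpace G]
    [NonUnitalCStarAlgebra A]
    (α : G → (A ≃⋆ₐ[ℂ] A))
    (hα : ∀ g h a, α (g * h) a = α g (α h a))
    (hcont : ∀ a : A, Continuous fun g => α g a)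
    (d : ℕ) (π : G →* Matrix.unitaryGroup (Fin d) ℂ)
    (hπcont : Continuous fun g => (π g : Matrix (Fin d) (Fin d) ℂ))
    -- the spectral subspace `A₂(π)`
    (A₂ : Set (Matrix (Fin d) (Fin d) A))
    (hA₂ : A₂ = {m | ∀ g : G, m.map (α g) =
      Matrix.of fun i j => ∑ l, (π g : Matrix (Fin d) (Fin d) ℂ) l j • m i l})
    -- the fixed-point algebra of `α ⊗ id`
    (F : Set (Matrix (Fin d) (Fin d) A))
    (hF : F = {m | ∀ g : G, m.map (α g) = m})
    -- the span of products `m * nᴴ`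
    (J : Submodule ℂ (Matrix (Fin d) (Fin d) A))
    (hJ : J = Submodule.span ℂ {x | ∃ m ∈ A₂, ∃ n ∈ A₂, x = m * nᴴ}) :
    (∀ m ∈ A₂, ∀ n ∈ A₂, m * nᴴ ∈ F) ∧
    (∀ x ∈ J, x ∈ F) ∧
    (∀ x ∈ J, ∀ y ∈ F, x * y ∈ J ∧ y * x ∈ J) :=
  spectral_subspace_products_ideal_of_fixedPoint_general α d π A₂ hA₂ F hF J hJ
end

section
/- Let A be a C*-algebra, G a compact group acting on A by α, and π a finite-dimensional unitary representation of G. With A₂(π) as above, for m, n ∈ A₂(π) the product m* n lies in the fixed-point algebra of the action g ↦ (α_g ⊗ Ad π(g)) on A ⊗ B(H_π), and the span of such products m* n is a two-sided ideal of that fixed-point algebra. -/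
open scoped Matrix

/-!
Embed `A` into its unitization `Ã`. There the scalar matrix `u = π(g)` becomes a unitary of
`M_d(Ã)`, and, writing `α_g` for the entrywise action, the two defining conditions become the
matrix identities `α_g(m) = m u` (for `m ∈ A₂(π)`) and `u α_g(x) u* = x` (fixed points), the
latter equivalent to `α_g(x) = u* x u`. Since `α_g` is a `*`-homomorphism,
`α_g(m* n) = u* m* n u`, so `m* n` is fixed; fixed points are closed under `*`; and for a fixed
`y` we get `α_g(n y) = n u u* y u = n y u`, so `A₂(π)` is a right module over the fixed-point
algebra. Hence `m* n y = m* (n y)` and `y m* n = (m y*)* n` are again products of the same kind.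
-/

namespace Unitary

theorem mul_star_self_mul {S : Type*} [Monoid S] [StarMul S] {u : S} (hu : u ∈ unitary S)
    (x : S) : u * (star u * x) = x := by
  rw [← mul_assoc, mul_star_self_of_mem hu, one_mul]

end Unitary

namespace Matrix

section Unitization

variable {R A ι : Type*} [CommRing R] [StarRing R] [NonUnitalRing A] [StarRing A] [Module R A]

variable (R) in
abbrev toUnitization (m : Matrix ι ι A) : Matrix ι ι (Unitization R A) :=
  m.map (Unitization.inrNonUnitalStarAlgHom R A)

theorem toUnitization_injective :
    Function.Injective (toUnitization R : Matrix ι ι A → Matrix ι ι (Unitization R A)) :=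
  map_injective Unitization.inr_injective

theorem toUnitization_conjTranspose (m : Matrix ι ι A) :
    toUnitization R mᴴ = star (toUnitization R m) :=
  conjTranspose_map _ fun a => map_star _ a

theorem toUnitization_mul [Fintype ι] (m m' : Matrix ι ι A) :
    toUnitization R (m * m') = toUnitization R m * toUnitization R m' :=
  Matrix.map_mul

variable [IsScalarTower R A A] [SMulCommClass R A A]

variable (A) in
abbrev scalarToUnitization (U : Matrix ι ι R) : Matrix ι ι (Unitization R A) :=
  U.map (algebraMap R (Unitization R A))

theorem toUnitization_of_sum_smul [Fintype ι] (U : Matrix ι ι R) (m : Matrix ι ι A) :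
    toUnitization R (of fun i j => ∑ l, U l j • m i l) =
      toUnitization R m * scalarToUnitization A U := by
  ext i j : 1
  simp [mul_apply, map_sum, Algebra.smul_def, Algebra.commutes]

variable [StarModule R A]

theorem scalarToUnitization_conjTranspose (U : Matrix ι ι R) :
    scalarToUnitization A Uᴴ = (scalarToUnitization A U)ᴴ :=
  conjTranspose_map _ fun r => algebraMap_star_comm r

variable [Fintype ι]

theorem scalarToUnitization_mem_unitary [DecidableEq ι] {U : Matrix ι ι R}
    (hU : U ∈ unitaryGroup ι R) :
    scalarToUnitization A U ∈ unitary (Matrix ι ι (Unitization R A)) := by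
  rw [Unitary.mem_iff, star_eq_conjTranspose] at hU ⊢
  rw [← scalarToUnitization_conjTranspose, ← Matrix.map_mul, ← Matrix.map_mul, hU.1, hU.2,
    and_self]
  exact Matrix.map_one _ (map_zero _) (map_one _)

theorem toUnitization_of_sum_sum_smul (U : Matrix ι ι R) (m : Matrix ι ι A) :
    toUnitization R (of fun i j => ∑ l, ∑ k, (U i l * star (U j k)) • m l k) =
      scalarToUnitization A U * toUnitization R m * star (scalarToUnitization A U) := by
  ext i j : 1
  simp only [mul_apply, map_apply, star_apply, of_apply, map_sum, map_smul, Finset.sum_mul]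
  refine Finset.sum_comm.trans
    (Finset.sum_congr rfl fun k _ => Finset.sum_congr rfl fun l _ => ?_)
  rw [Algebra.smul_def, map_mul, ← algebraMap_star_comm, mul_assoc, mul_assoc,
    Algebra.commutes (star (U j k))]

end Unitization

section SpectralSubspace

variable {R A ι G F : Type*} [Fintype ι] [CommRing R] [StarRing R] [NonUnitalRing A] [StarRing A]
  [Module R A] [IsScalarTower R A A] [SMulCommClass R A A] [FunLike F A A]
  {α : G → F} {π : G → Matrix ι ι R}

variable (A) in
def spectralSubspace (α : G → F) (π : G → Matrix ι ι R) : Set (Matrix ι ι A) :=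
  {m | ∀ g, m.map (α g) = of fun i j => ∑ l, π g l j • m i l}

def starProductSpan (α : G → F) (π : G → Matrix ι ι R) : Submodule R (Matrix ι ι A) :=
  Submodule.span R
    {x | ∃ m ∈ spectralSubspace A α π, ∃ m' ∈ spectralSubspace A α π, x = mᴴ * m'}

theorem mem_spectralSubspace_iff {m : Matrix ι ι A} :
    m ∈ spectralSubspace A α π ↔
      ∀ g, toUnitization R (m.map (α g)) = toUnitization R m * scalarToUnitization A (π g) := by
  simp only [spectralSubspace, ← toUnitization_of_sum_smul, toUnitization_injective.eq_iff]
  rfl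

variable [StarModule R A] [NonUnitalAlgHomClass F R A A]

/-- The fixed points of `g ↦ α_g ⊗ Ad π(g)`. -/
def adFixedPoints (α : G → F) (π : G → Matrix ι ι R) : Submodule R (Matrix ι ι A) where
  carrier := {x | ∀ g i j, ∑ l, ∑ k, (π g i l * star (π g j k)) • α g (x l k) = x i j}
  zero_mem' := by simp
  add_mem' {x y} hx hy g i j := by
    simp only [add_apply, map_add, smul_add, Finset.sum_add_distrib, hx g i j, hy g i j]
  smul_mem' c x hx g i j := by
    simp only [smul_apply, map_smul, smul_comm _ c, ← Finset.smul_sum, hx g i j]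

theorem mem_adFixedPoints_iff {x : Matrix ι ι A} :
    x ∈ adFixedPoints α π ↔ ∀ g, scalarToUnitization A (π g) * toUnitization R (x.map (α g)) *
      star (scalarToUnitization A (π g)) = toUnitization R x := by
  simp only [← toUnitization_of_sum_sum_smul, toUnitization_injective.eq_iff, ← Matrix.ext_iff]
  rfl

theorem conjTranspose_mem_adFixedPoints [StarHomClass F A A] {x : Matrix ι ι A}
    (hx : x ∈ adFixedPoints α π) : xᴴ ∈ adFixedPoints α π := by
  rw [mem_adFixedPoints_iff] at hx ⊢
  intro g
  rw [conjTranspose_map _ (map_star (α g)), toUnitization_conjTranspose,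
    toUnitization_conjTranspose, ← hx g]
  simp only [star_mul, star_star, mul_assoc]

variable [DecidableEq ι]

theorem mul_mem_spectralSubspace (hπ : ∀ g, π g ∈ unitaryGroup ι R) {m y : Matrix ι ι A}
    (hm : m ∈ spectralSubspace A α π) (hy : y ∈ adFixedPoints α π) :
    m * y ∈ spectralSubspace A α π := by
  rw [mem_spectralSubspace_iff] at hm ⊢
  rw [mem_adFixedPoints_iff] at hy
  intro g
  have hu := scalarToUnitization_mem_unitary (A := A) (hπ g)
  rw [Matrix.map_mul, toUnitization_mul, toUnitization_mul, hm g, ← hy g]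
  simp only [mul_assoc, Unitary.star_mul_self_of_mem hu, mul_one]

theorem mul_mem_starProductSpan_right (hπ : ∀ g, π g ∈ unitaryGroup ι R) {x y : Matrix ι ι A}
    (hx : x ∈ starProductSpan α π) (hy : y ∈ adFixedPoints α π) :
    x * y ∈ starProductSpan α π := by
  suffices starProductSpan α π ≤ (starProductSpan α π).comap (LinearMap.mulRight R y) from this hx
  refine Submodule.span_le.2 ?_
  rintro _ ⟨m, hm, m', hm', rfl⟩
  exact Submodule.subset_span ⟨m, hm, m' * y, mul_mem_spectralSubspace hπ hm' hy,
    Matrix.mul_assoc _ _ _⟩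

variable [StarHomClass F A A]

theorem conjTranspose_mul_mem_adFixedPoints (hπ : ∀ g, π g ∈ unitaryGroup ι R)
    {m m' : Matrix ι ι A} (hm : m ∈ spectralSubspace A α π)
    (hm' : m' ∈ spectralSubspace A α π) : mᴴ * m' ∈ adFixedPoints α π := by
  rw [mem_spectralSubspace_iff] at hm hm'
  refine mem_adFixedPoints_iff.2 fun g => ?_
  have hu := scalarToUnitization_mem_unitary (A := A) (hπ g)
  rw [Matrix.map_mul, conjTranspose_map _ (map_star (α g)), toUnitization_mul,
    toUnitization_conjTranspose, hm g, hm' g, toUnitization_mul, toUnitization_conjTranspose]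
  simp only [star_mul, mul_assoc, Unitary.mul_star_self_of_mem hu, Unitary.mul_star_self_mul hu,
    mul_one]

theorem starProductSpan_le_adFixedPoints (hπ : ∀ g, π g ∈ unitaryGroup ι R) :
    starProductSpan α π ≤ adFixedPoints α π :=
  Submodule.span_le.2 fun _ ⟨_, hm, _, hm', hx⟩ =>
    hx ▸ conjTranspose_mul_mem_adFixedPoints hπ hm hm'

theorem mul_mem_starProductSpan_left (hπ : ∀ g, π g ∈ unitaryGroup ι R) {x y : Matrix ι ι A}
    (hx : x ∈ starProductSpan α π) (hy : y ∈ adFixedPoints α π) :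
    y * x ∈ starProductSpan α π := by
  suffices starProductSpan α π ≤ (starProductSpan α π).comap (LinearMap.mulLeft R y) from this hx
  refine Submodule.span_le.2 ?_
  rintro _ ⟨m, hm, m', hm', rfl⟩
  refine Submodule.subset_span ⟨m * yᴴ, mul_mem_spectralSubspace hπ hm
    (conjTranspose_mem_adFixedPoints hy), m', hm', ?_⟩
  rw [LinearMap.mulLeft_apply, conjTranspose_mul, conjTranspose_conjTranspose, Matrix.mul_assoc]

end SpectralSubspace

end Matrix

theorem spectral_subspace_star_products_ideal_of_adjoint_fixedPoint_general
    {G A : Type*} [Group G]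
    [NonUnitalCStarAlgebra A]
    (α : G → (A ≃⋆ₐ[ℂ] A))
    (d : ℕ) (π : G →* Matrix.unitaryGroup (Fin d) ℂ)
    -- the spectral subspace `A₂(π)`
    (A₂ : Set (Matrix (Fin d) (Fin d) A))
    (hA₂ : A₂ = {m | ∀ g : G, m.map (α g) =
      Matrix.of fun i j => ∑ l, (π g : Matrix (Fin d) (Fin d) ℂ) l j • m i l})
    -- the fixed-point algebra of `g ↦ α_g ⊗ Ad π(g)`;  `(α_g ⊗ Ad π(g))(m) = m`
    -- reads entrywise as `Σ_{l,k} π(g)_{il} conj(π(g)_{jk}) • α_g(m_{lk}) = m_{ij}`.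
    (F : Set (Matrix (Fin d) (Fin d) A))
    (hF : F = {m | ∀ (g : G) (i j : Fin d),
      (∑ l, ∑ k, ((π g : Matrix (Fin d) (Fin d) ℂ) i l *
        star ((π g : Matrix (Fin d) (Fin d) ℂ) j k)) • α g (m l k)) = m i j})
    -- the span of products `mᴴ * n`
    (J : Submodule ℂ (Matrix (Fin d) (Fin d) A))
    (hJ : J = Submodule.span ℂ {x | ∃ m ∈ A₂, ∃ n ∈ A₂, x = mᴴ * n}) :
    (∀ m ∈ A₂, ∀ n ∈ A₂, mᴴ * n ∈ F) ∧
    (∀ x ∈ J, x ∈ F) ∧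
    (∀ x ∈ J, ∀ y ∈ F, x * y ∈ J ∧ y * x ∈ J) := by
  subst hA₂ hF hJ
  have hπ (g : G) : (π g : Matrix (Fin d) (Fin d) ℂ) ∈ Matrix.unitaryGroup (Fin d) ℂ := (π g).2
  exact ⟨fun m hm n hn => Matrix.conjTranspose_mul_mem_adFixedPoints hπ hm hn,
    fun x hx => Matrix.starProductSpan_le_adFixedPoints hπ hx,
    fun x hx y hy => ⟨Matrix.mul_mem_starProductSpan_right hπ hx hy,
      Matrix.mul_mem_starProductSpan_left hπ hx hy⟩⟩

/-- For a C*-dynamical system `(A, G, α)` with `G` compact and a finite-dimensional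
unitary representation `π` of `G`, with
`A₂(π) = { m : Matrix over A | (α_g ⊗ id)(m) = m (1 ⊗ π g) for all g }`,
the products `mᴴ * n` with `m, n ∈ A₂(π)` lie in the fixed-point algebra of the
action `g ↦ α_g ⊗ Ad π(g)`, and their linear span is a two-sided ideal of that
fixed-point algebra. -/
theorem spectral_subspace_star_products_ideal_of_adjoint_fixedPoint
    {G A : Type*} [Group G] [TopologicalSpace G] [IsTopologicalGroup G] [CompactSpace G]
    [NonUnitalCStarAlgebra A]
    (α : G → (A ≃⋆ₐ[ℂ] A))
    (hα : ∀ g h a, α (g * h) a = α g (α h a))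
    (hcont : ∀ a : A, Continuous fun g => α g a)
    (d : ℕ) (π : G →* Matrix.unitaryGroup (Fin d) ℂ)
    (hπcont : Continuous fun g => (π g : Matrix (Fin d) (Fin d) ℂ))
    -- the spectral subspace `A₂(π)`
    (A₂ : Set (Matrix (Fin d) (Fin d) A))
    (hA₂ : A₂ = {m | ∀ g : G, m.map (α g) =
      Matrix.of fun i j => ∑ l, (π g : Matrix (Fin d) (Fin d) ℂ) l j • m i l})
    -- the fixed-point algebra of `g ↦ α_g ⊗ Ad π(g)`;  `(α_g ⊗ Ad π(g))(m) = m`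
    -- reads entrywise as `Σ_{l,k} π(g)_{il} conj(π(g)_{jk}) • α_g(m_{lk}) = m_{ij}`.
    (F : Set (Matrix (Fin d) (Fin d) A))
    (hF : F = {m | ∀ (g : G) (i j : Fin d),
      (∑ l, ∑ k, ((π g : Matrix (Fin d) (Fin d) ℂ) i l *
        star ((π g : Matrix (Fin d) (Fin d) ℂ) j k)) • α g (m l k)) = m i j})
    -- the span of products `mᴴ * n`
    (J : Submodule ℂ (Matrix (Fin d) (Fin d) A))
    (hJ : J = Submodule.span ℂ {x | ∃ m ∈ A₂, ∃ n ∈ A₂, x = mᴴ * n}) :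
    (∀ m ∈ A₂, ∀ n ∈ A₂, mᴴ * n ∈ F) ∧
    (∀ x ∈ J, x ∈ F) ∧
    (∀ x ∈ J, ∀ y ∈ F, x * y ∈ J ∧ y * x ∈ J) :=
  spectral_subspace_star_products_ideal_of_adjoint_fixedPoint_general α d π A₂ hA₂ F hF J hJ
end
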